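/- arXiv:1302.4350 — 7 statements merged into one kernel-verified Lean document; each statement's English description precedes it below -/
import Mathlib

section
/- For every natural number k and every class S of τ-structures: S is preserved under substructures modulo k-sized cores (S ∈ PSC(k)) if and only if the complement class of S (the class of all τ-structures not in S) is preserved under k-ary covered extensions (S̄ ∈ PCE(k)). -/
/-!
Preservation theorems generalizing the Łoś–Tarski theorem
(Sankaran, Adsul, Chakraborty).

Conventions: a vocabulary is a `FirstOrder.Language`; following classical
model theory, all structures (and all substructures considered) are nonempty.
-/

namespace LTGen

open FirstOrder FirstOrder.Language

universe u v w

variable {L : FirstOrder.Language.{u, v}}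

/-- Existentially quantify the last `m` de Bruijn variables of a bounded formula. -/
def exsN {α : Type*} : ∀ (m : ℕ) {n : ℕ}, L.BoundedFormula α (n + m) → L.BoundedFormula α n
  | 0, _, φ => φ
  | m + 1, _, φ => exsN m φ.ex

/-- Universally quantify the last `m` de Bruijn variables of a bounded formula. -/
def allsN {α : Type*} : ∀ (m : ℕ) {n : ℕ}, L.BoundedFormula α (n + m) → L.BoundedFormula α n
  | 0, _, φ => φ
  | m + 1, _, φ => allsN m φ.all

/-- `σ` is a prenex sentence `∃x₁…x_k ∀y₁…y_m ψ` with `ψ` quantifier-free: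
a Σ⁰₂ sentence with exactly `k` existential quantifiers followed only by
universal quantifiers. -/
def IsExUnivSentence (k : ℕ) (σ : L.Sentence) : Prop :=
  ∃ (m : ℕ) (ψ : L.BoundedFormula Empty (0 + k + m)), ψ.IsQF ∧ σ = exsN k (allsN m ψ)

/-- `σ` is a prenex sentence `∀x₁…x_k ∃y₁…y_m ψ` with `ψ` quantifier-free:
a Π⁰₂ sentence with exactly `k` universal quantifiers followed only by
existential quantifiers. -/
def IsUnivExSentence (k : ℕ) (σ : L.Sentence) : Prop :=
  ∃ (m : ℕ) (ψ : L.BoundedFormula Empty (0 + k + m)), ψ.IsQF ∧ σ = allsN k (exsN m ψ)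

/-- `σ` is a universal (Π⁰₁) sentence `∀x₁…x_m ψ` with `ψ` quantifier-free. -/
def IsPi1Sentence (σ : L.Sentence) : Prop :=
  ∃ (m : ℕ) (ψ : L.BoundedFormula Empty (0 + m)), ψ.IsQF ∧ σ = allsN m ψ

/-- The sentence `φ` is preserved under substructures modulo `k`-sized cores
(`φ ∈ PSC(k)`): every model `M` of `φ` has a subset `C` of its universe of size
at most `k` such that every substructure of `M` whose universe contains `C`
is a model of `φ`. -/
def SentenceInPSC (k : ℕ) (φ : L.Sentence) : Prop :=
  ∀ (M : Type w) [L.Structure M] [Nonempty M], M ⊨ φ →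
    ∃ C : Finset M, C.card ≤ k ∧
      ∀ N : L.Substructure M, ↑C ⊆ (N : Set M) → Nonempty ↥N → ↥N ⊨ φ

/-- The sentence `φ` is preserved under substructures modulo a finite core
(`φ ∈ PSC_f`). -/
def SentenceInPSCf (φ : L.Sentence) : Prop :=
  ∀ (M : Type w) [L.Structure M] [Nonempty M], M ⊨ φ →
    ∃ C : Finset M,
      ∀ N : L.Substructure M, ↑C ⊆ (N : Set M) → Nonempty ↥N → ↥N ⊨ φ

/-- `R` is a `k`-ary cover of `M` (equivalently, `M` is a `k`-ary covered
extension of the non-empty collection `R` of substructures of `M`): every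
subset of the universe of `M` of size at most `k` is contained in the universe
of some member of `R`. -/
def KaryCover (k : ℕ) {M : Type w} [L.Structure M] (R : Set (L.Substructure M)) : Prop :=
  R.Nonempty ∧ ∀ C : Finset M, C.card ≤ k → ∃ N ∈ R, (C : Set M) ⊆ (N : Set M)

/-- `R` is a finitary cover of `M` (equivalently, `M` is a finitary covered
extension of `R`): every finite subset of the universe of `M` is contained in
the universe of some member of `R`. -/
def FinitaryCover {M : Type w} [L.Structure M] (R : Set (L.Substructure M)) : Prop :=
  R.Nonempty ∧ ∀ C : Finset M, ∃ N ∈ R, (C : Set M) ⊆ (N : Set M)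

/-- The sentence `φ` is preserved under `k`-ary covered extensions
(`φ ∈ PCE(k)`). -/
def SentenceInPCE (k : ℕ) (φ : L.Sentence) : Prop :=
  ∀ (M : Type w) [L.Structure M] [Nonempty M] (R : Set (L.Substructure M)),
    KaryCover k R → (∀ N ∈ R, Nonempty ↥N ∧ ↥N ⊨ φ) → M ⊨ φ

/-- The sentence `φ` is preserved under finitary covered extensions
(`φ ∈ PCE_f`). -/
def SentenceInPCEf (φ : L.Sentence) : Prop :=
  ∀ (M : Type w) [L.Structure M] [Nonempty M] (R : Set (L.Substructure M)),
    FinitaryCover R → (∀ N ∈ R, Nonempty ↥N ∧ ↥N ⊨ φ) → M ⊨ φ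

/-- The theory `T` is preserved under substructures modulo `k`-sized cores
(`T ∈ PSC(k)`). -/
def TheoryInPSC (k : ℕ) (T : L.Theory) : Prop :=
  ∀ (M : Type w) [L.Structure M] [Nonempty M], M ⊨ T →
    ∃ C : Finset M, C.card ≤ k ∧
      ∀ N : L.Substructure M, ↑C ⊆ (N : Set M) → Nonempty ↥N → ↥N ⊨ T

/-- The theory `T` is preserved under substructures modulo a finite core
(`T ∈ PSC_f`). -/
def TheoryInPSCf (T : L.Theory) : Prop :=
  ∀ (M : Type w) [L.Structure M] [Nonempty M], M ⊨ T →
    ∃ C : Finset M,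
      ∀ N : L.Substructure M, ↑C ⊆ (N : Set M) → Nonempty ↥N → ↥N ⊨ T

/-- The theory `T` is preserved under `k`-ary covered extensions
(`T ∈ PCE(k)`). -/
def TheoryInPCE (k : ℕ) (T : L.Theory) : Prop :=
  ∀ (M : Type w) [L.Structure M] [Nonempty M] (R : Set (L.Substructure M)),
    KaryCover k R → (∀ N ∈ R, Nonempty ↥N ∧ ↥N ⊨ T) → M ⊨ T

/-- The theory `T` is preserved under finitary covered extensions
(`T ∈ PCE_f`). -/
def TheoryInPCEf (T : L.Theory) : Prop :=
  ∀ (M : Type w) [L.Structure M] [Nonempty M] (R : Set (L.Substructure M)),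
    FinitaryCover R → (∀ N ∈ R, Nonempty ↥N ∧ ↥N ⊨ T) → M ⊨ T

/-- A class `S` of `τ`-structures is preserved under substructures modulo
`k`-sized cores (`S ∈ PSC(k)`). -/
def ClassInPSC (k : ℕ) (S : ∀ M : Type w, L.Structure M → Prop) : Prop :=
  ∀ (M : Type w) [str : L.Structure M] [Nonempty M], S M str →
    ∃ C : Finset M, C.card ≤ k ∧
      ∀ N : L.Substructure M, ↑C ⊆ (N : Set M) → Nonempty ↥N → S ↥N inferInstance

/-- A class `S` of `τ`-structures is preserved under substructures modulo a
finite core (`S ∈ PSC_f`). -/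
def ClassInPSCf (S : ∀ M : Type w, L.Structure M → Prop) : Prop :=
  ∀ (M : Type w) [str : L.Structure M] [Nonempty M], S M str →
    ∃ C : Finset M,
      ∀ N : L.Substructure M, ↑C ⊆ (N : Set M) → Nonempty ↥N → S ↥N inferInstance

/-- A class `S` of `τ`-structures is preserved under `k`-ary covered
extensions (`S ∈ PCE(k)`). -/
def ClassInPCE (k : ℕ) (S : ∀ M : Type w, L.Structure M → Prop) : Prop :=
  ∀ (M : Type w) [str : L.Structure M] [Nonempty M] (R : Set (L.Substructure M)),
    KaryCover k R → (∀ N ∈ R, Nonempty ↥N ∧ S ↥N inferInstance) → S M str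

/-- A class `S` of `τ`-structures is preserved under finitary covered
extensions (`S ∈ PCE_f`). -/
def ClassInPCEf (S : ∀ M : Type w, L.Structure M → Prop) : Prop :=
  ∀ (M : Type w) [str : L.Structure M] [Nonempty M] (R : Set (L.Substructure M)),
    FinitaryCover R → (∀ N ∈ R, Nonempty ↥N ∧ S ↥N inferInstance) → S M str

/-- `IsSigmaPi true N φ` says that `φ` is a Σ⁰_N formula: a prenex formula
whose quantifier prefix consists of `N` consecutive (possibly empty) blocks of
like quantifiers beginning with an existential block, with quantifier-free
matrix. `IsSigmaPi false N φ` says that `φ` is a Π⁰_N formula (first block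
universal). `Σ⁰₀ = Π⁰₀ =` quantifier-free. The `n` de Bruijn variables of `φ`
are its free variables. -/
def IsSigmaPi : Bool → ℕ → ∀ {n : ℕ}, L.BoundedFormula Empty n → Prop
  | _, 0, _, φ => φ.IsQF
  | b, N + 1, n, φ =>
      ∃ (m : ℕ) (ψ : L.BoundedFormula Empty (n + m)),
        IsSigmaPi (!b) N ψ ∧ φ = cond b (exsN m ψ) (allsN m ψ)

/-- The embedding `f : M ↪ N` is Σ⁰_n-elementary (its image is a
Σ⁰_n-elementary substructure of `N`): for every Σ⁰_n formula `φ(x₁,…,x_r)` and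
every `r`-tuple `a` from `M`, `N ⊨ φ(f(a))` iff `M ⊨ φ(a)`. -/
def SigmaNElementary (nl : ℕ) {M N : Type*} [L.Structure M] [L.Structure N]
    (f : M ↪[L] N) : Prop :=
  ∀ (r : ℕ) (φ : L.BoundedFormula Empty r), IsSigmaPi true nl φ →
    ∀ a : Fin r → M,
      (φ.Realize (fun x => x.elim) (f ∘ a) ↔ φ.Realize (fun x => x.elim) a)


/-- For every `k` and every class `S` of `τ`-structures:
`S ∈ PSC(k)` iff the complement class of `S` is in `PCE(k)`. -/
theorem classInPSC_iff_compl_classInPCE (k : ℕ) (S : ∀ M : Type w, L.Structure M → Prop) :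
    ClassInPSC.{u, v, w} k S ↔ ClassInPCE.{u, v, w} k (fun M str => ¬ S M str) := by
  constructor
  · intro hPSC M str _ R hR hall hSM
    obtain ⟨C, hCk, hC⟩ := hPSC M hSM
    obtain ⟨N, hNR, hCN⟩ := hR.2 C hCk
    exact (hall N hNR).2 ((hC N hCN (hall N hNR).1))
  · intro hPCE M str _ hSM
    by_contra hno
    push_neg at hno
    refine hPCE M {N : L.Substructure M | Nonempty ↥N ∧ ¬ S ↥N inferInstance} ?_
      (fun N hN => hN) hSM
    constructor
    · obtain ⟨N, hCN, hNe, hNS⟩ := hno ∅ (by simp)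
      exact ⟨N, hNe, hNS⟩
    · intro C hCk
      obtain ⟨N, hCN, hNe, hNS⟩ := hno C hCk
      exact ⟨N, ⟨hNe, hNS⟩, hCN⟩

end LTGen
end

section
/- For every natural number k and every first-order sentence φ over a vocabulary τ: φ is in PSC(k) if and only if ¬φ is in PCE(k). -/
/-!
Preservation theorems generalizing the Łoś–Tarski theorem
(Sankaran, Adsul, Chakraborty).

Conventions: a vocabulary is a `FirstOrder.Language`; following classical
model theory, all structures (and all substructures considered) are nonempty.
-/

namespace LTGen

open FirstOrder FirstOrder.Language

universe u v w

variable {L : FirstOrder.Language.{u, v}}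

/-- For every `k` and every first-order sentence `φ`:
`φ ∈ PSC(k)` iff `¬φ ∈ PCE(k)`. -/
theorem sentenceInPSC_iff_not_sentenceInPCE (k : ℕ) (φ : L.Sentence) :
    SentenceInPSC.{u, v, w} k φ ↔ SentenceInPCE.{u, v, w} k (BoundedFormula.not φ) := by
  constructor
  · intro h M _ _ R hR hRφ
    simp only [Sentence.Realize, Formula.Realize, BoundedFormula.realize_not] at *
    intro hMφ
    obtain ⟨C, hCk, hC⟩ := h M hMφ
    obtain ⟨N, hNR, hCN⟩ := hR.2 C hCk
    obtain ⟨hNne, hNφ⟩ := hRφ N hNR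
    exact hNφ (hC N hCN hNne)
  · intro h M _ _ hMφ
    by_contra hcon
    push_neg at hcon
    set R : Set (L.Substructure M) :=
      {N | Nonempty ↥N ∧ ¬ (↥N ⊨ φ)} with hRdef
    have hcover : KaryCover k R := by
      constructor
      · obtain ⟨N, hCN, hNne, hNφ⟩ := hcon ∅ (by simp)
        exact ⟨N, hNne, hNφ⟩
      · intro C hCk
        obtain ⟨N, hCN, hNne, hNφ⟩ := hcon C hCk
        exact ⟨N, ⟨hNne, hNφ⟩, hCN⟩
    have := h M R hcover (fun N hN => ⟨hN.1, by
      simpa [Sentence.Realize, Formula.Realize] using hN.2⟩)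
    simp only [Sentence.Realize, Formula.Realize, BoundedFormula.realize_not] at this
    exact this hMφ

end LTGen
end

section
/- A class S of τ-structures is preserved under substructures modulo a finite core (S ∈ PSC_f) if and only if the complement class of S is preserved under finitary covered extensions (S̄ ∈ PCE_f). In particular, a first-order sentence φ is in PSC_f if and only if ¬φ is in PCE_f. -/
/-!
Preservation theorems generalizing the Łoś–Tarski theorem
(Sankaran, Adsul, Chakraborty).

Conventions: a vocabulary is a `FirstOrder.Language`; following classical
model theory, all structures (and all substructures considered) are nonempty.
-/

namespace LTGen

open FirstOrder FirstOrder.Language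

universe u v w

variable {L : FirstOrder.Language.{u, v}}

/-- A class `S` of `τ`-structures is in `PSC_f` iff its
complement class is in `PCE_f`; in particular, a first-order sentence `φ` is
in `PSC_f` iff `¬φ` is in `PCE_f`. -/
theorem classInPSCf_iff_compl_classInPCEf :
    (∀ S : ∀ M : Type w, L.Structure M → Prop,
        ClassInPSCf.{u, v, w} S ↔ ClassInPCEf.{u, v, w} (fun M str => ¬ S M str)) ∧
    (∀ φ : L.Sentence,
        SentenceInPSCf.{u, v, w} φ ↔ SentenceInPCEf.{u, v, w} (BoundedFormula.not φ)) := by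
  have key : ∀ S : ∀ M : Type w, L.Structure M → Prop,
      ClassInPSCf.{u, v, w} S ↔ ClassInPCEf.{u, v, w} (fun M str => ¬ S M str) := by
    intro S
    constructor
    · intro h M str _ R hR hmem hSM
      obtain ⟨C, hC⟩ := h M hSM
      obtain ⟨N, hNR, hCN⟩ := hR.2 C
      obtain ⟨hNne, hNnot⟩ := hmem N hNR
      exact hNnot (hC N hCN hNne)
    · intro h M str _ hSM
      by_contra hc
      push_neg at hc
      refine h M {N | Nonempty ↥N ∧ ¬ S ↥N inferInstance} ⟨?_, ?_⟩ (fun N hN => hN) hSM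
      · obtain ⟨N, _, hne, hnot⟩ := hc ∅
        exact ⟨N, hne, hnot⟩
      · intro C
        obtain ⟨N, hN, hne, hnot⟩ := hc C
        exact ⟨N, ⟨hne, hnot⟩, hN⟩
  refine ⟨key, fun φ => ?_⟩
  have := key (fun M str => @Sentence.Realize L M str φ)
  constructor
  · intro h M str _ R hR hmem
    have : ¬ ¬ (M ⊨ φ.not) := fun hn => this.mp h M R hR
      (fun N hN => ⟨(hmem N hN).1, by
        have := (hmem N hN).2
        rw [Sentence.realize_not] at this
        exact this⟩)
      (by rw [Sentence.realize_not] at hn; exact not_not.mp hn)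
    exact not_not.mp this
  · intro h
    refine this.mpr ?_
    intro M str _ R hR hmem hMφ
    have hM := h M R hR (fun N hN => ⟨(hmem N hN).1, by
      rw [Sentence.realize_not]; exact (hmem N hN).2⟩)
    rw [Sentence.realize_not] at hM
    exact hM hMφ


end LTGen
end

section
/- Let τ be a finite first-order vocabulary. For first-order sentences over τ, the classes PCE_f and PCE coincide: a sentence is in PCE_f if and only if it is in PCE(k) for some natural number k. -/
/-!
Preservation theorems generalizing the Łoś–Tarski theorem
(Sankaran, Adsul, Chakraborty).

Conventions: a vocabulary is a `FirstOrder.Language`; following classical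
model theory, all structures (and all substructures considered) are nonempty.
-/

namespace LTGen

open FirstOrder FirstOrder.Language

universe u v w

variable {L : FirstOrder.Language.{u, v}}

section UltraSub

open Filter FirstOrder.Language.Structure

variable {α : Type*} (u : Ultrafilter α) (M : α → Type w) [∀ a, L.Structure (M a)]

/-- helper: the class of `g`. -/
def pmk (g : ∀ a, M a) : (u : Filter α).Product M :=
  Quotient.mk ((u : Filter α).productSetoid M) g

lemma pmk_out (g : ∀ a, M a) : ∀ᶠ a in (u : Filter α), (pmk u M g).out a = g a :=
  Quotient.exact (Quotient.out_eq (pmk u M g))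

lemma out_pmk (x : (u : Filter α).Product M) : pmk u M x.out = x := Quotient.out_eq x

variable (N : ∀ a, L.Substructure (M a))

/-- The ultraproduct of a family of substructures, as a substructure of the
ultraproduct. -/
def ultraSub : L.Substructure ((u : Filter α).Product M) where
  carrier := {x | ∀ᶠ a in (u : Filter α), x.out a ∈ N a}
  fun_mem := by
    intro n f x hx
    have hx' : ∀ i, x i = pmk u M ((x i).out) := fun i => (out_pmk u M (x i)).symm
    have h1 : funMap f x = pmk u M (fun a => funMap f fun i => (x i).out a) := by
      conv_lhs => rw [funext hx']
      exact Ultraproduct.funMap_cast f _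
    have h2 : ∀ᶠ a in (u : Filter α),
        (funMap f x).out a = funMap f fun i => (x i).out a := by
      rw [h1]; exact pmk_out u M _
    have h3 : ∀ᶠ a in (u : Filter α), ∀ i, (x i).out a ∈ N a :=
      (eventually_all).2 hx
    filter_upwards [h2, h3] with a ha hb
    rw [ha]
    exact (N a).fun_mem f _ hb

lemma mem_ultraSub_pmk (g : ∀ a, M a) :
    pmk u M g ∈ ultraSub u M N ↔ ∀ᶠ a in (u : Filter α), g a ∈ N a := by
  have h := pmk_out u M g
  constructor
  · intro hmem; filter_upwards [h, hmem] with a ha hb; rwa [ha] at hb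
  · intro hmem; show ∀ᶠ a in (u : Filter α), _ ∈ N a
    filter_upwards [h, hmem] with a ha hb; rwa [ha]


lemma mem_ultraSub_iff (x : (u : Filter α).Product M) :
    x ∈ ultraSub u M N ↔ ∀ᶠ a in (u : Filter α), x.out a ∈ N a := Iff.rfl

lemma funMap_pmk {n : ℕ} (f : L.Functions n) (g : Fin n → ∀ a, M a) :
    funMap f (fun i => pmk u M (g i)) = pmk u M (fun a => funMap f fun i => g i a) :=
  funMap_quotient_mk' ((u : Filter α).productSetoid M) f g

lemma relMap_pmk {n : ℕ} (r : L.Relations n) (g : Fin n → ∀ a, M a) :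
    RelMap r (fun i => pmk u M (g i)) ↔
      ∀ᶠ a in (u : Filter α), RelMap r fun i => g i a :=
  relMap_quotient_mk' ((u : Filter α).productSetoid M) r g

variable [∀ a, Nonempty (↥(N a))]

open scoped Classical in
/-- The underlying map of the isomorphism between the ultraproduct of
substructures and the corresponding substructure of the ultraproduct. -/
noncomputable def usMap (x : (u : Filter α).Product (fun a => ↥(N a))) :
    ↥(ultraSub u M N) :=
  Quotient.lift (fun (g : ∀ a, ↥(N a)) =>
      (⟨pmk u M (fun a => ↑(g a)), (mem_ultraSub_pmk u M N _).2
        (Eventually.of_forall fun a => (g a).2)⟩ : ↥(ultraSub u M N)))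
    (fun g h hgh => Subtype.ext (Quotient.sound ((Eventually.mono hgh)
      fun a ha => congrArg Subtype.val ha))) x

lemma usMap_val (g : ∀ a, ↥(N a)) :
    (usMap u M N (pmk u (fun a => ↥(N a)) g) : (u : Filter α).Product M) =
      pmk u M (fun a => ↑(g a)) := rfl

lemma usMap_bijective : Function.Bijective (usMap u M N) := by
  classical
  constructor
  · intro x y hxy
    induction x using Quotient.inductionOn with
    | _ g =>
      induction y using Quotient.inductionOn with
      | _ h =>
        have : pmk u M (fun a => ↑(g a)) = pmk u M (fun a => ↑(h a)) :=
          congrArg Subtype.val hxy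
        refine Quotient.sound (Eventually.mono (Quotient.exact this)
          fun a ha => Subtype.ext ha)
  · rintro ⟨x, hx⟩
    rw [mem_ultraSub_iff] at hx
    refine ⟨pmk u (fun a => ↥(N a))
      (fun a => if h : x.out a ∈ N a then (⟨x.out a, h⟩ : ↥(N a))
        else Classical.arbitrary _), Subtype.ext ?_⟩
    rw [usMap_val]
    show _ = x
    conv_rhs => rw [← out_pmk u M x]
    refine Quotient.sound (Eventually.mono hx fun a ha => ?_)
    exact congrArg Subtype.val (dif_pos ha)

lemma usMap_fun {n : ℕ} (f : L.Functions n)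
    (x : Fin n → (u : Filter α).Product (fun a => ↥(N a))) :
    usMap u M N (funMap f x) = funMap f (fun i => usMap u M N (x i)) := by
  obtain ⟨g, rfl⟩ : ∃ g : Fin n → ∀ a, ↥(N a),
      x = fun i => pmk u (fun a => ↥(N a)) (g i) :=
    ⟨fun i => (x i).out, funext fun i => (out_pmk _ _ _).symm⟩
  apply Subtype.ext
  rw [funMap_pmk u (fun a => ↥(N a)) f g]
  show pmk u M (fun a => ↑(funMap f fun i => g i a)) =
    funMap f fun i => pmk u M (fun a => ↑(g i a))
  rw [funMap_pmk]
  rfl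

lemma usMap_rel {n : ℕ} (r : L.Relations n)
    (x : Fin n → (u : Filter α).Product (fun a => ↥(N a))) :
    RelMap r (fun i => usMap u M N (x i)) ↔ RelMap r x := by
  obtain ⟨g, rfl⟩ : ∃ g : Fin n → ∀ a, ↥(N a),
      x = fun i => pmk u (fun a => ↥(N a)) (g i) :=
    ⟨fun i => (x i).out, funext fun i => (out_pmk _ _ _).symm⟩
  rw [relMap_pmk u (fun a => ↥(N a)) r g]
  show RelMap r (fun i => pmk u M (fun a => ↑(g i a))) ↔ _
  rw [relMap_pmk]
  exact eventually_congr (Eventually.of_forall fun a => Iff.rfl)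

/-- The isomorphism between the ultraproduct of substructures and the
corresponding substructure of the ultraproduct. -/
noncomputable def ultraSubEquiv :
    (u : Filter α).Product (fun a => ↥(N a)) ≃[L] ↥(ultraSub u M N) where
  toEquiv := Equiv.ofBijective _ (usMap_bijective u M N)
  map_fun' f x := usMap_fun u M N f x
  map_rel' r x := usMap_rel u M N r x

variable [∀ a, Nonempty (M a)]

lemma ultraSub_realize_iff (sigma : L.Sentence) :
    ↥(ultraSub u M N) ⊨ sigma ↔ ∀ᶠ a in (u : Filter α), ↥(N a) ⊨ sigma := by
  rw [← StrongHomClass.realize_sentence (ultraSubEquiv u M N) sigma,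
    Ultraproduct.sentence_realize]

end UltraSub




section Main

open Filter FirstOrder.Language.Structure

lemma exists_psc_of_pscf {σ : L.Sentence} (h : SentenceInPSCf.{u, v, w} σ) :
    ∃ k : ℕ, SentenceInPSC.{u, v, w} k σ := by
  classical
  by_contra hk
  push_neg at hk
  have hk' : ∀ k : ℕ, ∃ (M : Type w) (_ : L.Structure M) (_ : Nonempty M),
      M ⊨ σ ∧ ∀ C : Finset M, C.card ≤ k →
        ∃ N : L.Substructure M, ↑C ⊆ (N : Set M) ∧ Nonempty ↥N ∧ ¬ ↥N ⊨ σ := by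
    intro k
    have h1 := hk k
    unfold SentenceInPSC at h1
    push_neg at h1
    obtain ⟨M, str, hne, hσ, hbad⟩ := h1
    exact ⟨M, str, hne, hσ, fun C hC => by
      obtain ⟨N, h2, h3⟩ := hbad C hC
      exact ⟨N, h2, h3⟩⟩
  choose M str hne hσ hbad using hk'
  letI : ∀ k, L.Structure (M k) := str
  haveI : ∀ k, Nonempty (M k) := hne
  let u : Ultrafilter ℕ := Filter.hyperfilter ℕ
  let MP := (u : Filter ℕ).Product M
  haveI : Nonempty MP := Ultraproduct.Product.instNonempty
  have hMP : MP ⊨ σ := (Ultraproduct.sentence_realize σ).2 (Eventually.of_forall hσ)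
  obtain ⟨C, hC⟩ := h MP hMP
  let D : ∀ k, Finset (M k) := fun k =>
    if C.card ≤ k then C.image (fun x => x.out k) else ∅
  have hDcard : ∀ k, (D k).card ≤ k := by
    intro k
    by_cases hcc : C.card ≤ k
    · simp only [D, if_pos hcc]
      exact le_trans (Finset.card_image_le) hcc
    · simp only [D, if_neg hcc, Finset.card_empty]
      exact Nat.zero_le k
  choose Nk hNk1 hNk2 hNk3 using fun k => hbad k (D k) (hDcard k)
  haveI : ∀ k, Nonempty ↥(Nk k) := hNk2
  have hsub : ↑C ⊆ ((ultraSub u M Nk : L.Substructure MP) : Set MP) := by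
    intro c hc
    rw [SetLike.mem_coe, mem_ultraSub_iff]
    have hev : ∀ᶠ k in (u : Filter ℕ), C.card ≤ k :=
      (Nat.hyperfilter_le_atTop (eventually_ge_atTop C.card))
    filter_upwards [hev] with k hk2
    have hmem : c.out k ∈ D k := by
      simp only [D, if_pos hk2]
      exact Finset.mem_image_of_mem _ hc
    exact hNk1 k hmem
  haveI hneUS : Nonempty ↥(ultraSub u M Nk) :=
    ⟨usMap u M Nk (Classical.arbitrary _)⟩
  have hreal := hC (ultraSub u M Nk) hsub hneUS
  rw [ultraSub_realize_iff] at hreal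
  obtain ⟨k, hkF⟩ := (hreal.mono fun k h' => hNk3 k h').exists
  exact hkF

lemma pce_of_psc_not {k : ℕ} {φ : L.Sentence} (h : SentenceInPSC.{u, v, w} k φ.not) :
    SentenceInPCE.{u, v, w} k φ := by
  intro M _ _ R hcover hmods
  by_contra hφ
  have hnot : M ⊨ φ.not := (Sentence.realize_not (M := M)).2 hφ
  obtain ⟨C, hCcard, hC⟩ := h M hnot
  obtain ⟨N, hNR, hNsub⟩ := hcover.2 C hCcard
  obtain ⟨hNne, hNφ⟩ := hmods N hNR
  exact (Sentence.realize_not (M := ↥N)).1 (hC N hNsub hNne) hNφ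

lemma pscf_not_of_pcef {φ : L.Sentence} (h : SentenceInPCEf.{u, v, w} φ) :
    SentenceInPSCf.{u, v, w} φ.not := by
  intro M strM neM hM
  by_contra hcon
  push_neg at hcon
  have hcon' : ∀ C : Finset M, ∃ N : L.Substructure M,
      ↑C ⊆ (N : Set M) ∧ Nonempty ↥N ∧ ↥N ⊨ φ := by
    intro C
    obtain ⟨N, h1, h2, h3⟩ := hcon C
    refine ⟨N, h1, h2, ?_⟩
    by_contra hNφ
    exact h3 ((Sentence.realize_not (M := ↥N)).2 hNφ)
  set R : Set (L.Substructure M) := {N | Nonempty ↥N ∧ ↥N ⊨ φ} with hR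
  have hcover : FinitaryCover R := by
    constructor
    · obtain ⟨N, _, h2, h3⟩ := hcon' ∅
      exact ⟨N, h2, h3⟩
    · intro C
      obtain ⟨N, h1, h2, h3⟩ := hcon' C
      exact ⟨N, ⟨h2, h3⟩, h1⟩
  exact (Sentence.realize_not (M := M)).1 hM (h M R hcover fun N hN => hN)

end Main

/-- Over a finite vocabulary, the classes `PCE_f` and `PCE`
coincide for first-order sentences: a sentence is in `PCE_f` iff it is in
`PCE(k)` for some natural number `k`. -/
theorem sentenceInPCEf_iff_sentenceInPCE [Finite L.Symbols] (φ : L.Sentence) :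
    SentenceInPCEf.{u, v, w} φ ↔ ∃ k : ℕ, SentenceInPCE.{u, v, w} k φ := by
  constructor
  · intro h
    obtain ⟨k, hk⟩ := exists_psc_of_pscf (pscf_not_of_pcef h)
    exact ⟨k, pce_of_psc_not hk⟩
  · rintro ⟨k, hk⟩
    intro M _ _ R hcov hmods
    exact hk M R ⟨hcov.1, fun C _ => hcov.2 C⟩ hmods

end LTGen
end

section
/- Over the vocabulary of directed graphs (one binary relation E), let T be the universal (Π⁰₁) theory asserting, for each natural number n ≥ 1, that there is no cycle of length n; the models of T are exactly the acyclic directed graphs. Then the class of models of T is in PCE_f, but T is not equivalent to any set of prenex sentences of the form ∀x₁…∀x_k ∃y₁…∃y_m ψ (ψ quantifier-free) for any fixed natural number k; equivalently, the class of acyclic directed graphs is not in PCE(k) for any k. Hence PCE is strictly contained in PCE_f for first-order theories. -/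
/-!
Preservation theorems generalizing the Łoś–Tarski theorem
(Sankaran, Adsul, Chakraborty).

Conventions: a vocabulary is a `FirstOrder.Language`; following classical
model theory, all structures (and all substructures considered) are nonempty.
-/

namespace LTGen

open FirstOrder FirstOrder.Language

universe u v w

variable {L : FirstOrder.Language.{u, v}}

/-- `V` (a structure for the language of one binary relation) contains a cycle
of length `n`: `n` distinct vertices each related by the edge relation to the
next, and the last related to the first. -/
def HasCycleOfLength (V : Type w) [Language.graph.Structure V] (n : ℕ) : Prop :=
  ∃ f : Fin n → V, Function.Injective f ∧
    ∀ i : Fin n, Structure.RelMap adj ![f i, f ⟨((i : ℕ) + 1) % n, Nat.mod_lt _ i.pos⟩]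

/-! ### Auxiliary machinery -/

section Gen

open FirstOrder.Language.BoundedFormula

variable {M : Type*} [L.Structure M]

theorem realize_allsN {m : ℕ} :
    ∀ {n : ℕ} (φ : L.BoundedFormula Empty (n + m)) (v : Empty → M) (xs : Fin n → M),
      (allsN m φ).Realize v xs ↔ ∀ g : Fin m → M, φ.Realize v (Fin.append xs g) := by
  induction m with
  | zero =>
    intro n φ v xs
    have he : ∀ g : Fin 0 → M, Fin.append xs g = xs := by
      intro g; funext i; exact Fin.append_left xs g i
    simp only [allsN]
    constructor
    · intro h g; rw [he g]; exact h
    · intro h; have := h Fin.elim0; rwa [he] at this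
  | succ m ih =>
    intro n φ v xs
    simp only [allsN]
    rw [ih φ.all v xs]
    constructor
    · intro h g
      have := realize_all.mp (h (Fin.init g)) (g (Fin.last m))
      rwa [← Fin.append_snoc, Fin.snoc_init_self] at this
    · intro h g
      rw [realize_all]
      intro a
      have := h (Fin.snoc g a)
      rwa [Fin.append_snoc] at this

theorem realize_exsN {m : ℕ} :
    ∀ {n : ℕ} (φ : L.BoundedFormula Empty (n + m)) (v : Empty → M) (xs : Fin n → M),
      (exsN m φ).Realize v xs ↔ ∃ g : Fin m → M, φ.Realize v (Fin.append xs g) := by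
  induction m with
  | zero =>
    intro n φ v xs
    have he : ∀ g : Fin 0 → M, Fin.append xs g = xs := by
      intro g; funext i; exact Fin.append_left xs g i
    simp only [exsN]
    constructor
    · intro h; exact ⟨Fin.elim0, by rwa [he]⟩
    · rintro ⟨g, hg⟩; rwa [he g] at hg
  | succ m ih =>
    intro n φ v xs
    simp only [exsN]
    rw [ih φ.ex v xs]
    constructor
    · rintro ⟨g, hg⟩
      obtain ⟨a, ha⟩ := realize_ex.mp hg
      exact ⟨Fin.snoc g a, by rwa [Fin.append_snoc]⟩
    · rintro ⟨g, hg⟩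
      refine ⟨Fin.init g, realize_ex.mpr ⟨g (Fin.last m), ?_⟩⟩
      rwa [← Fin.append_snoc, Fin.snoc_init_self]

theorem comp_append {α β : Type*} (f : α → β) {n m : ℕ} (a : Fin n → α) (b : Fin m → α) :
    f ∘ Fin.append a b = Fin.append (f ∘ a) (f ∘ b) := by
  funext i
  induction i using Fin.addCases with
  | left j => simp [Fin.append_left]
  | right j => simp [Fin.append_right]

theorem realize_qf_embedding {N : Type*} [L.Structure N] (f : M ↪[L] N)
    {k : ℕ} {φ : L.BoundedFormula Empty k} (h : φ.IsQF) (v : Empty → M) (xs : Fin k → M) :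
    φ.Realize (⇑f ∘ v) (⇑f ∘ xs) ↔ φ.Realize v xs := by
  induction h with
  | falsum => exact Iff.rfl
  | of_isAtomic h =>
    cases h with
    | equal t₁ t₂ =>
      rw [realize_bdEqual, realize_bdEqual, ← Sum.comp_elim,
        HomClass.realize_term, HomClass.realize_term]
      exact f.injective.eq_iff
    | rel R ts =>
      rw [realize_rel, realize_rel, ← Sum.comp_elim]
      simp only [HomClass.realize_term]
      exact StrongHomClass.map_rel f R _
  | imp _ _ ih1 ih2 => simp only [realize_imp, ih1, ih2]

theorem sentence_realize_iff (σ : L.Sentence) :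
    M ⊨ σ ↔ BoundedFormula.Realize σ (default : Empty → M) (default : Fin 0 → M) := Iff.rfl

/-- Every `∀^k ∃*` sentence is preserved under `k`-ary covered extensions. -/
theorem sentenceInPCE_of_univEx {k : ℕ} {σ : L.Sentence} (h : IsUnivExSentence k σ) :
    SentenceInPCE.{u, v, w} k σ := by
  classical
  obtain ⟨m, ψ, hqf, rfl⟩ := h
  intro M _ _ R hR hmod
  rw [sentence_realize_iff, realize_allsN]
  intro g
  obtain ⟨N, hNR, hsub⟩ := hR.2 (Finset.image g Finset.univ)
    (le_trans Finset.card_image_le (by simp))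
  obtain ⟨hne, hNσ⟩ := hmod N hNR
  haveI := hne
  rw [sentence_realize_iff, realize_allsN] at hNσ
  let g' : Fin k → ↥N := fun i => ⟨g i, hsub (by simp)⟩
  have hg := hNσ g'
  rw [realize_exsN] at hg
  obtain ⟨h', hh⟩ := hg
  rw [realize_exsN]
  refine ⟨⇑N.subtype ∘ h', ?_⟩
  have := (realize_qf_embedding N.subtype hqf _ _).mpr hh
  rw [comp_append, comp_append] at this
  have e1 : ⇑N.subtype ∘ (default : Empty → ↥N) = (default : Empty → M) :=
    funext fun x => x.elim
  have e2 : ⇑N.subtype ∘ (default : Fin 0 → ↥N) = (default : Fin 0 → M) :=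
    funext fun i => i.elim0
  have e3 : ⇑N.subtype ∘ g' = g := rfl
  rw [e1, e2, e3] at this
  exact this

end Gen

/-! ### The theory of acyclic directed graphs -/

section Acyc

open FirstOrder.Language.BoundedFormula FirstOrder.Language.Structure

/-- Finite conjunction of a list of bounded formulas. -/
def conjList {n : ℕ} : List (Language.graph.BoundedFormula Empty n) →
    Language.graph.BoundedFormula Empty n
  | [] => ⊤
  | φ :: l => φ ⊓ conjList l

theorem conjList_isQF {n : ℕ} :
    ∀ l : List (Language.graph.BoundedFormula Empty n), (∀ φ ∈ l, φ.IsQF) → (conjList l).IsQF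
  | [], _ => IsQF.top
  | φ :: l, h =>
    (h φ (by simp)).inf (conjList_isQF l fun ψ hψ => h ψ (by simp [hψ]))

theorem realize_conjList {V : Type*} [Language.graph.Structure V] {n : ℕ} (v : Empty → V)
    (xs : Fin n → V) :
    ∀ l : List (Language.graph.BoundedFormula Empty n),
      (conjList l).Realize v xs ↔ ∀ φ ∈ l, φ.Realize v xs
  | [] => by simp [conjList]
  | φ :: l => by simp [conjList, realize_conjList v xs l]

/-- Atomic formula asserting an edge from variable `i` to variable `j`. -/
def edgeF {n : ℕ} (i j : Fin n) : Language.graph.BoundedFormula Empty n :=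
  adj.boundedFormula₂ (Term.var (Sum.inr i)) (Term.var (Sum.inr j))

/-- Formula asserting variables `i` and `j` are distinct (trivial if `i = j`). -/
def neF {n : ℕ} (i j : Fin n) : Language.graph.BoundedFormula Empty n :=
  if i = j then ⊤ else ((Term.var (Sum.inr i)).bdEqual (Term.var (Sum.inr j))).not

/-- The quantifier-free matrix asserting the `n` variables do not form a cycle. -/
def cycMatrix (n : ℕ) : Language.graph.BoundedFormula Empty n :=
  (conjList ((List.finRange n).map fun i =>
      edgeF i ⟨((i : ℕ) + 1) % n, Nat.mod_lt _ i.pos⟩) ⊓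
    conjList (((List.finRange n) ×ˢ (List.finRange n)).map fun p => neF p.1 p.2)).not

theorem cycMatrix_isQF (n : ℕ) : (cycMatrix n).IsQF := by
  refine IsQF.not (IsQF.inf (conjList_isQF _ ?_) (conjList_isQF _ ?_))
  · intro φ hφ
    obtain ⟨i, -, rfl⟩ := List.mem_map.mp hφ
    exact (IsAtomic.rel _ _).isQF
  · intro φ hφ
    obtain ⟨p, -, rfl⟩ := List.mem_map.mp hφ
    rw [neF]
    split_ifs
    · exact IsQF.top
    · exact (IsAtomic.equal _ _).isQF.not

theorem realize_cycMatrix {V : Type*} [Language.graph.Structure V] {n : ℕ} (v : Empty → V)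
    (g : Fin n → V) :
    (cycMatrix n).Realize v g ↔
      ¬ ((∀ i : Fin n, RelMap adj ![g i, g ⟨((i : ℕ) + 1) % n, Nat.mod_lt _ i.pos⟩]) ∧
          Function.Injective g) := by
  rw [cycMatrix, realize_not, realize_inf]
  refine not_congr (and_congr ?_ ?_)
  · rw [realize_conjList]
    constructor
    · intro h i
      have := h _ (List.mem_map.mpr ⟨i, List.mem_finRange i, rfl⟩)
      simpa [edgeF] using this
    · intro h φ hφ
      obtain ⟨i, -, rfl⟩ := List.mem_map.mp hφ
      simpa [edgeF] using h i
  · rw [realize_conjList]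
    constructor
    · intro h a b hab
      by_contra hne
      have := h _ (List.mem_map.mpr ⟨(a, b), by simp, rfl⟩)
      rw [neF, if_neg hne] at this
      simp only [realize_not, realize_bdEqual, Term.realize_var, Sum.elim_inr] at this
      exact this hab
    · intro h φ hφ
      obtain ⟨⟨a, b⟩, -, rfl⟩ := List.mem_map.mp hφ
      rw [neF]
      split_ifs with hab
      · simp
      · simp only [realize_not, realize_bdEqual, Term.realize_var, Sum.elim_inr]
        exact fun he => hab (h he)

/-- The sentence asserting there is no cycle of length `n`. -/
def acycSentence (n : ℕ) : Language.graph.Sentence :=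
  allsN n ((cycMatrix n).castLE (Nat.zero_add n).ge)

/-- The theory asserting, for each `n ≥ 1`, that there is no cycle of length `n`. -/
def acycT : Language.graph.Theory :=
  Set.range fun n : ℕ => acycSentence (n + 1)

theorem realize_acycSentence {V : Type*} [Language.graph.Structure V] (n : ℕ) :
    (V ⊨ acycSentence n) ↔ ¬ HasCycleOfLength V n := by
  rw [acycSentence, sentence_realize_iff, realize_allsN]
  have key : ∀ g : Fin n → V,
      ((cycMatrix n).castLE (Nat.zero_add n).ge).Realize default
          (Fin.append (default : Fin 0 → V) g) ↔
        (cycMatrix n).Realize default g := by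
    intro g
    rw [realize_castLE_of_eq (Nat.zero_add n).symm]
    have e : (Fin.append (default : Fin 0 → V) g) ∘ Fin.cast (Nat.zero_add n).symm = g := by
      funext i
      have e2 : Fin.cast (Nat.zero_add n).symm i = Fin.natAdd 0 i := by
        ext; simp
      rw [Function.comp_apply, e2, Fin.append_right]
    rw [e]
  constructor
  · intro h hcyc
    obtain ⟨f, hinj, hE⟩ := hcyc
    have := (key f).mp (h f)
    rw [realize_cycMatrix] at this
    exact this ⟨hE, hinj⟩
  · intro h g
    rw [key g, realize_cycMatrix]
    intro hc
    exact h ⟨g, hc.2, hc.1⟩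

theorem models_acycT_iff {V : Type*} [Language.graph.Structure V] :
    V ⊨ acycT ↔ ∀ n : ℕ, 1 ≤ n → ¬ HasCycleOfLength V n := by
  rw [Theory.model_iff]
  constructor
  · intro h n hn
    have hmem : acycSentence n ∈ acycT :=
      ⟨n - 1, show acycSentence (n - 1 + 1) = acycSentence n by rw [Nat.sub_add_cancel hn]⟩
    exact (realize_acycSentence n).mp (h _ hmem)
  · rintro h σ ⟨m, rfl⟩
    exact (realize_acycSentence (m + 1)).mpr (h (m + 1) (Nat.succ_le_succ (Nat.zero_le m)))

theorem relMap_sub {M : Type*} [Language.graph.Structure M] (N : Language.graph.Substructure M)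
    (a b : ↥N) :
    RelMap adj ![(a : M), (b : M)] ↔ RelMap adj ![a, b] := by
  have h := StrongHomClass.map_rel N.subtype adj ![a, b]
  have e : ⇑N.subtype ∘ ![a, b] = ![(a : M), (b : M)] := by
    funext i; fin_cases i <;> rfl
  rwa [e] at h

/-- `PCE_f` for the acyclicity theory. -/
theorem acycT_PCEf : TheoryInPCEf.{0, 0, w} acycT := by
  intro M _ _ R hR hmod
  classical
  rw [models_acycT_iff]
  rintro n hn ⟨f, hinj, hE⟩
  obtain ⟨N, hNR, hsub⟩ := hR.2 (Finset.image f Finset.univ)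
  have hmem : ∀ i, f i ∈ N := fun i => hsub (by simp [Finset.coe_image])
  have hNcyc : HasCycleOfLength ↥N n := by
    refine ⟨fun i => ⟨f i, hmem i⟩, fun a b hab => hinj (congrArg Subtype.val hab), fun i => ?_⟩
    exact (relMap_sub N _ _).mp (hE i)
  exact (models_acycT_iff.mp (hmod N hNR).2) n hn hNcyc

/-! ### The counterexample: directed cycles -/

instance zmodStruct (m : ℕ) : Language.graph.Structure (ULift.{w} (ZMod m)) where
  RelMap | .adj => fun x => (x 0).down + 1 = (x 1).down

theorem relMap_zmod {m : ℕ} (a b : ULift.{w} (ZMod m)) :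
    RelMap adj ![a, b] ↔ a.down + 1 = b.down := Iff.rfl

/-- The full directed cycle on `ZMod (k + 2)`. -/
theorem zmod_hasCycle (k : ℕ) : HasCycleOfLength (ULift.{w} (ZMod (k + 2))) (k + 2) := by
  refine ⟨fun i => ⟨((i : ℕ) : ZMod (k + 2))⟩, ?_, ?_⟩
  · intro a b hab
    have h1 : ((a : ℕ) : ZMod (k + 2)) = ((b : ℕ) : ZMod (k + 2)) := congrArg ULift.down hab
    have h2 := congrArg ZMod.val h1
    rw [ZMod.val_cast_of_lt a.isLt, ZMod.val_cast_of_lt b.isLt] at h2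
    exact Fin.ext h2
  · intro i
    rw [relMap_zmod]
    show ((i : ℕ) : ZMod (k + 2)) + 1 = ((((i : ℕ) + 1) % (k + 2) : ℕ) : ZMod (k + 2))
    rw [ZMod.natCast_mod]
    push_cast
    ring

/-- Substructure with a given carrier (the graph language has no functions). -/
def subOf {M : Type*} [Language.graph.Structure M] (s : Set M) :
    Language.graph.Substructure M :=
  ⟨s, fun f => isEmptyElim f⟩

@[simp] theorem coe_subOf {M : Type*} [Language.graph.Structure M] (s : Set M) :
    ((subOf s : Language.graph.Substructure M) : Set M) = s := rfl

/-- Any proper substructure of the directed cycle is acyclic. -/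
theorem proper_sub_acyclic (k : ℕ)
    (N : Language.graph.Substructure (ULift.{w} (ZMod (k + 2))))
    (hN : (N : Set (ULift.{w} (ZMod (k + 2)))) ≠ Set.univ)
    (n : ℕ) (hn : 1 ≤ n) : ¬ HasCycleOfLength ↥N n := by
  classical
  rintro ⟨f, hinj, hE⟩
  let g : Fin n → ULift.{w} (ZMod (k + 2)) := fun i => (f i : ULift.{w} (ZMod (k + 2)))
  have hgE : ∀ i : Fin n,
      (g i).down + 1 = (g ⟨((i : ℕ) + 1) % n, Nat.mod_lt _ i.pos⟩).down := by
    intro i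
    exact (relMap_zmod _ _).mp ((relMap_sub N _ _).mpr (hE i))
  have hgE' : ∀ i j : Fin n, ((i : ℕ) + 1) % n = (j : ℕ) →
      (g i).down + 1 = (g j).down := by
    intro i j hij
    have h := hgE i
    rwa [show (⟨((i : ℕ) + 1) % n, Nat.mod_lt _ i.pos⟩ : Fin n) = j from Fin.ext hij] at h
  -- every vertex of the cycle is `g 0 + j`
  have step : ∀ j : ℕ, ∀ hj : j < n,
      (g ⟨j, hj⟩).down = (g ⟨0, hn⟩).down + (j : ZMod (k + 2)) := by
    intro j
    induction j with
    | zero => intro hj; simp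
    | succ j ih =>
      intro hj
      have hj' : j < n := Nat.lt_of_succ_lt hj
      have hmod : (j + 1) % n = j + 1 := Nat.mod_eq_of_lt hj
      have hE' := hgE' ⟨j, hj'⟩ ⟨j + 1, hj⟩ hmod
      rw [ih hj'] at hE'
      rw [← hE']
      push_cast
      ring
  -- going all the way around forces `(k+2) ∣ n`
  have hlast : ((n : ℕ) : ZMod (k + 2)) = 0 := by
    have hn1 : n - 1 < n := Nat.sub_lt hn Nat.one_pos
    have hmod : ((n - 1) + 1) % n = 0 := by
      rw [Nat.sub_add_cancel hn, Nat.mod_self]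
    have hE' := hgE' ⟨n - 1, hn1⟩ ⟨0, hn⟩ hmod
    rw [step (n - 1) hn1] at hE'
    have h0 : (g ⟨0, hn⟩).down + (((n - 1 : ℕ) : ZMod (k + 2)) + 1)
        = (g ⟨0, hn⟩).down + 0 := by
      rw [← add_assoc, hE']
      simp
    have h1 : ((n - 1 : ℕ) : ZMod (k + 2)) + 1 = 0 := add_left_cancel h0
    have h2 : (((n - 1) + 1 : ℕ) : ZMod (k + 2)) = 0 := by push_cast; exact h1
    rwa [Nat.sub_add_cancel hn] at h2
  have hdvd : (k + 2) ∣ n := (ZMod.natCast_eq_zero_iff n (k + 2)).mp hlast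
  have hle : k + 2 ≤ n := Nat.le_of_dvd hn hdvd
  -- but `N` is a proper subset, so it has fewer than `k + 2` elements
  obtain ⟨x, hx⟩ := (Set.ne_univ_iff_exists_notMem _).mp hN
  haveI : DecidablePred (· ∈ N) := Classical.decPred _
  have hcard1 : n ≤ Fintype.card { y : ULift.{w} (ZMod (k + 2)) // y ∈ N } :=
    le_trans (by simp) (Fintype.card_le_of_injective f hinj)
  have hcard2 : Fintype.card { y : ULift.{w} (ZMod (k + 2)) // y ∈ N }
      < Fintype.card (ULift.{w} (ZMod (k + 2))) :=
    Fintype.card_subtype_lt (x := x) hx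
  have hcardM : Fintype.card (ULift.{w} (ZMod (k + 2))) = k + 2 := by
    rw [Fintype.card_ulift, ZMod.card]
  omega

theorem acycT_not_PCE (k : ℕ) : ¬ TheoryInPCE.{0, 0, w} k acycT := by
  intro h
  classical
  haveI : Nonempty (ULift.{w} (ZMod (k + 2))) := ⟨⟨0⟩⟩
  let M := ULift.{w} (ZMod (k + 2))
  let R : Set (Language.graph.Substructure M) :=
    {N | (N : Set M) ≠ Set.univ ∧ (N : Set M).Nonempty}
  have hcardM : Fintype.card (ULift.{w} (ZMod (k + 2))) = k + 2 := by
    rw [Fintype.card_ulift, ZMod.card]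
  have hproper : ∀ D : Finset M, D.card ≤ k + 1 → ((D : Set M) ≠ Set.univ) := by
    intro D hD he
    have hall : ∀ x : M, x ∈ D := by
      intro x
      have := Set.eq_univ_iff_forall.mp he x
      exact this
    have : (Finset.univ : Finset M).card ≤ D.card :=
      Finset.card_le_card fun x _ => hall x
    rw [Finset.card_univ, hcardM] at this
    omega
  have hcover : KaryCover k R := by
    constructor
    · refine ⟨subOf {(⟨0⟩ : M)}, ?_, ⟨⟨0⟩, rfl⟩⟩
      have : ({(⟨0⟩ : M)} : Finset M).card ≤ k + 1 := by simp
      have := hproper {(⟨0⟩ : M)} this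
      simpa using this
    · intro C hC
      refine ⟨subOf ↑(insert (⟨0⟩ : M) C), ⟨?_, ⟨⟨0⟩, by simp⟩⟩, ?_⟩
      · have hcard : (insert (⟨0⟩ : M) C).card ≤ k + 1 :=
          le_trans (Finset.card_insert_le _ _) (by omega)
        simpa using hproper _ hcard
      · intro x hx
        simp only [coe_subOf, Finset.coe_insert, Set.mem_insert_iff]
        exact Or.inr hx
  have hmods : ∀ N ∈ R, Nonempty ↥N ∧ ↥N ⊨ acycT := by
    rintro N ⟨hN, ⟨x, hxN⟩⟩
    refine ⟨⟨⟨x, hxN⟩⟩, ?_⟩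
    rw [models_acycT_iff]
    exact proper_sub_acyclic k N hN
  have := h M R hcover hmods
  rw [models_acycT_iff] at this
  exact this (k + 2) (by omega) (zmod_hasCycle k)

end Acyc

/-- Over the vocabulary of directed graphs there is a
universal (Π⁰₁) theory `T` whose models are exactly the acyclic directed
graphs; its class of models is in `PCE_f`, but `T` is not equivalent to any
set of `∀^k ∃*` prenex sentences for any fixed `k` — equivalently, the class
of acyclic directed graphs is not in `PCE(k)` for any `k`. Hence `PCE` is
strictly contained in `PCE_f` for first-order theories. -/
theorem acyclic_theory_in_PCEf_not_in_PCE :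
    ∃ T : Language.graph.Theory,
      (∀ σ ∈ T, IsPi1Sentence σ) ∧
      (∀ (V : Type w) [Language.graph.Structure V] [Nonempty V],
          (V ⊨ T ↔ ∀ n : ℕ, 1 ≤ n → ¬ HasCycleOfLength V n)) ∧
      TheoryInPCEf.{0, 0, w} T ∧
      (∀ k : ℕ, ¬ ∃ T' : Language.graph.Theory,
          (∀ σ ∈ T', IsUnivExSentence k σ) ∧
          ∀ (V : Type w) [Language.graph.Structure V] [Nonempty V], (V ⊨ T ↔ V ⊨ T')) ∧
      (∀ k : ℕ, ¬ TheoryInPCE.{0, 0, w} k T) := by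
  refine ⟨acycT, ?_, ?_, acycT_PCEf, ?_, acycT_not_PCE⟩
  · rintro σ ⟨n, rfl⟩
    exact ⟨n + 1, (cycMatrix (n + 1)).castLE (Nat.zero_add (n + 1)).ge,
      (cycMatrix_isQF (n + 1)).castLE, rfl⟩
  · intro V _ _
    exact models_acycT_iff
  · rintro k ⟨T', hform, hequiv⟩
    apply acycT_not_PCE k
    intro M _ _ R hcov hmod
    rw [hequiv M, Theory.model_iff]
    intro σ hσ
    refine sentenceInPCE_of_univEx (hform σ hσ) M R hcov ?_
    intro N hN
    obtain ⟨hne, hNT⟩ := hmod N hN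
    refine ⟨hne, ?_⟩
    haveI := hne
    exact (Theory.model_iff _).mp ((hequiv ↥N).mp hNT) σ hσ

end LTGen
end

section
/- Let τ be a finite vocabulary, T a first-order theory over τ whose class of models is preserved under substructures, and S a finite subset of T (identified with the conjunction of its sentences). Then there exists a universal (Π⁰₁) sentence ξ over τ such that T ⊨ ξ and ξ ⊨ S, i.e. ξ is a Π⁰₁ interpolant between T and S. -/
/-!
Preservation theorems generalizing the Łoś–Tarski theorem
(Sankaran, Adsul, Chakraborty).

Conventions: a vocabulary is a `FirstOrder.Language`; following classical
model theory, all structures (and all substructures considered) are nonempty.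
-/

namespace LTGen

open FirstOrder FirstOrder.Language

universe u v w

variable {L : FirstOrder.Language.{u, v}}

/-!
The Łoś–Tarski argument. Let `Γ` be the set of Π⁰₁ consequences of `T`. A countable model `M`
of `Γ` is a model of `T`: were `T` together with the quantifier-free diagram of `M`
inconsistent, then by compactness `T` would prove the universal closure of the negation of a
finite part of that diagram, a Π⁰₁ sentence false in `M`. So `M` embeds into a model of `T`.
By downward Löwenheim–Skolem that model may be taken countable, hence in `Type w`, where
preservation under substructures applies to the image of `M`. Every model of `Γ` has a
countable elementary substructure, so `Γ ⊨ ⋀ S`; compactness yields finitely many members of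
`Γ` entailing `⋀ S`, and their conjunction is again Π⁰₁.
-/

open FirstOrder FirstOrder.Language BoundedFormula

theorem _root_.FirstOrder.Language.BoundedFormula.IsQF.toFormula {α : Type*} {n : ℕ}
    {φ : L.BoundedFormula α n} (h : φ.IsQF) : φ.toFormula.IsQF := by
  induction h with
  | falsum => exact isQF_bot
  | of_isAtomic h =>
    cases h with
    | equal => exact (IsAtomic.equal _ _).isQF
    | rel => exact (IsAtomic.rel _ _).isQF
  | imp _ _ ih₁ ih₂ => exact ih₁.imp ih₂

theorem _root_.FirstOrder.Language.BoundedFormula.IsQF.restrictFreeVar {α β : Type*}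
    [DecidableEq α] {n : ℕ} {φ : L.BoundedFormula α n} (h : φ.IsQF) :
    ∀ f : φ.freeVarFinset → β, (φ.restrictFreeVar f).IsQF := by
  induction h with
  | falsum => exact fun _ => isQF_bot
  | of_isAtomic h =>
    cases h with
    | equal => exact fun _ => (IsAtomic.equal _ _).isQF
    | rel => exact fun _ => (IsAtomic.rel _ _).isQF
  | imp _ _ ih₁ ih₂ => exact fun _ => (ih₁ _).imp (ih₂ _)

theorem _root_.FirstOrder.Language.BoundedFormula.IsQF.iInf {α β : Type*} [Finite β] {n : ℕ}
    {f : β → L.BoundedFormula α n} (h : ∀ b, (f b).IsQF) : (BoundedFormula.iInf f).IsQF := by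
  have : ∀ l : List β, ((l.map f).foldr (· ⊓ ·) ⊤).IsQF := fun l => by
    induction l with
    | nil => exact IsQF.top
    | cons b l ih => exact (h b).inf ih
  exact this _

section Pi1Sentences

variable {α β : Type*}

theorem allsN_eq_alls : ∀ {m : ℕ} (ψ : L.BoundedFormula α (0 + m)), allsN m ψ = ψ.alls
  | 0, _ => rfl
  | _ + 1, ψ => allsN_eq_alls ψ.all

theorem isPi1Sentence_alls {m : ℕ} {ψ : L.BoundedFormula Empty m} (hψ : ψ.IsQF) :
    IsPi1Sentence ψ.alls := by
  obtain ⟨k, rfl⟩ : ∃ k, m = 0 + k := ⟨m, (zero_add m).symm⟩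
  exact ⟨k, ψ, hψ, (allsN_eq_alls ψ).symm⟩

theorem isPi1Sentence_iAlls [Finite β] {φ : L.Formula (Empty ⊕ β)} (hφ : φ.IsQF) :
    IsPi1Sentence (φ.iAlls β) :=
  isPi1Sentence_alls (hφ.relabel _)

theorem IsPi1Sentence.exists_isQF_realize_iff {σ : L.Sentence} (h : IsPi1Sentence σ) :
    ∃ (k : ℕ) (φ : L.Formula (Empty ⊕ Fin k)), φ.IsQF ∧
      ∀ (M : Type*) [L.Structure M], M ⊨ σ ↔ ∀ v : Fin k → M, φ.Realize (Sum.elim default v) := by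
  obtain ⟨m, ψ, hψ, rfl⟩ := h
  refine ⟨0 + m, ψ.toFormula, hψ.toFormula, fun M _ => ?_⟩
  rw [allsN_eq_alls, Sentence.Realize, realize_alls]
  simp only [realize_toFormula, Sum.elim_comp_inl, Sum.elim_comp_inr]

theorem IsPi1Sentence.exists_inf {σ₁ σ₂ : L.Sentence} (h₁ : IsPi1Sentence σ₁)
    (h₂ : IsPi1Sentence σ₂) : ∃ ξ : L.Sentence, IsPi1Sentence ξ ∧
      ∀ (M : Type*) [L.Structure M] [Nonempty M], M ⊨ ξ ↔ M ⊨ σ₁ ∧ M ⊨ σ₂ := by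
  obtain ⟨k₁, φ₁, hφ₁, hσ₁⟩ := h₁.exists_isQF_realize_iff
  obtain ⟨k₂, φ₂, hφ₂, hσ₂⟩ := h₂.exists_isQF_realize_iff
  refine ⟨(φ₁.relabel (Sum.map id Sum.inl) ⊓ φ₂.relabel (Sum.map id Sum.inr)).iAlls _,
    isPi1Sentence_iAlls ((hφ₁.relabel _).inf (hφ₂.relabel _)), fun M _ _ => ?_⟩
  rw [hσ₁, hσ₂, Sentence.Realize, Formula.realize_iAlls]
  simp only [Formula.realize_inf, Formula.realize_relabel, Sum.elim_comp_map, Function.comp_id]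
  constructor
  · intro h
    exact ⟨fun v => (h (Sum.elim v fun _ => Classical.arbitrary M)).1,
      fun v => (h (Sum.elim (fun _ => Classical.arbitrary M) v)).2⟩
  · rintro ⟨h₁, h₂⟩ i
    exact ⟨h₁ _, h₂ _⟩

theorem exists_isPi1Sentence_realize_iff_forall_mem (F : Finset L.Sentence)
    (hF : ∀ σ ∈ F, IsPi1Sentence σ) : ∃ ξ : L.Sentence, IsPi1Sentence ξ ∧
      ∀ (M : Type*) [L.Structure M] [Nonempty M], M ⊨ ξ ↔ ∀ σ ∈ F, M ⊨ σ := by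
  classical
  induction F using Finset.induction_on with
  | empty => exact ⟨⊤, ⟨0, ⊤, IsQF.top, rfl⟩, fun M _ _ => by simp⟩
  | insert σ F _ ih =>
    obtain ⟨ξ, hξ, hξF⟩ := ih fun τ hτ => hF τ (Finset.mem_insert_of_mem hτ)
    obtain ⟨ξ', hξ', hξ'σ⟩ := (hF σ (Finset.mem_insert_self σ F)).exists_inf hξ
    exact ⟨ξ', hξ', fun M _ _ => by rw [hξ'σ M, hξF M, Finset.forall_mem_insert]⟩

end Pi1Sentences

section UniversalClosure

variable {α : Type*} [DecidableEq α]

noncomputable def allClosure (φ : L.Formula α) : L.Sentence :=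
  Formula.iAlls φ.freeVarFinset (φ.restrictFreeVar Sum.inr)

theorem isPi1Sentence_allClosure {φ : L.Formula α} (hφ : φ.IsQF) :
    IsPi1Sentence (allClosure φ) :=
  isPi1Sentence_iAlls (hφ.restrictFreeVar _)

theorem realize_allClosure {M : Type*} [L.Structure M] [Nonempty M] (φ : L.Formula α) :
    M ⊨ allClosure φ ↔ ∀ v : α → M, φ.Realize v := by
  rw [allClosure, Sentence.Realize, Formula.realize_iAlls]
  constructor
  · intro h v
    exact (realize_restrictFreeVar (f := Sum.inr) v fun _ => rfl).1 (h (v ∘ (↑)))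
  · intro h i
    classical
    let v : α → M := fun a => if ha : a ∈ φ.freeVarFinset then i ⟨a, ha⟩ else Classical.arbitrary M
    exact (realize_restrictFreeVar v fun a => by simp [v, a.2]).2 (h v)

theorem models_allClosure {T : L.Theory} {φ : L.Formula α} (h : T ⊨ᵇ φ) : T ⊨ᵇ allClosure φ :=
  Theory.models_sentence_iff.2 fun P => (realize_allClosure φ).2 fun _ => h.realize_formula P

end UniversalClosure

section Diagram

variable {M N : Type*} [L.Structure M] [L.Structure N]

variable (L) in
def qfDiagram (M : Type*) [L.Structure M] : L[[M]].Theory :=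
  Formula.equivSentence '' {φ : L.Formula M | φ.IsQF ∧ φ.Realize id}

def embeddingOfRealizeQF (f : M → N)
    (hf : ∀ φ : L.Formula M, φ.IsQF → φ.Realize id → φ.Realize f) : M ↪[L] N :=
  have hiff : ∀ φ : L.Formula M, φ.IsQF → (φ.Realize f ↔ φ.Realize id) := fun φ hφ =>
    ⟨fun h => by_contra fun h' => (hf φ.not hφ.not h') h, hf φ hφ⟩
  { toFun := f
    inj' := fun a b hab => by
      simpa using (hiff ((Term.var a).equal (Term.var b)) (IsAtomic.equal _ _).isQF).1
        (by simpa using hab)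
    map_fun' := fun g x => by
      simpa [Function.comp_def, eq_comm] using (hiff ((Term.func g (Term.var ∘ x)).equal
        (Term.var (Structure.funMap g x))) (IsAtomic.equal _ _).isQF).2 (by simp)
    map_rel' := fun r x => by
      simpa [Function.comp_def] using hiff (r.formula (Term.var ∘ x)) (IsAtomic.rel _ _).isQF }

def embeddingOfModelsQFDiagram [L[[M]].Structure N] [(L.lhomWithConstants M).IsExpansionOn N]
    (hN : N ⊨ qfDiagram L M) : M ↪[L] N :=
  embeddingOfRealizeQF (fun a => (L.con a : N)) fun φ hφ hφM =>
    (Formula.realize_equivSentence N φ).1 (hN.realize_of_mem _ ⟨φ, ⟨hφ, hφM⟩, rfl⟩)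

def pi1Consequences (T : L.Theory) : L.Theory :=
  {ξ | IsPi1Sentence ξ ∧ T ⊨ᵇ ξ}

theorem isSatisfiable_onTheory_union_qfDiagram {T : L.Theory} [Nonempty M]
    (hM : M ⊨ pi1Consequences T) :
    ((L.lhomWithConstants M).onTheory T ∪ qfDiagram L M).IsSatisfiable := by
  classical
  rw [Theory.isSatisfiable_iff_isFinitelySatisfiable]
  intro T₀ hT₀
  let Φ : Finset (L.Formula M) := {φ ∈ T₀.image Formula.equivSentence.symm | φ.IsQF ∧ φ.Realize id}
  let χ : L.Formula M := Formula.iInf fun φ : Φ => φ.1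
  have hχ : χ.IsQF := IsQF.iInf fun φ => (Finset.mem_filter.1 φ.2).2.1
  have hχM : χ.Realize id := Formula.realize_iInf.2 fun φ => (Finset.mem_filter.1 φ.2).2.2
  by_contra hunsat
  have hTχ : T ⊨ᵇ χ.not := by
    refine Theory.models_formula_iff.2 fun P v hχv => hunsat ?_
    let := constantsOn.structure v
    have hPT : P ⊨ (L.lhomWithConstants M).onTheory T := (LHom.onTheory_model _ _).2 P.is_model
    have : P ⊨ (T₀ : L[[M]].Theory) := by
      refine (Theory.model_iff _).2 fun σ hσ => ?_
      rcases hT₀ hσ with hσT | ⟨φ, hφ, rfl⟩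
      · exact hPT.realize_of_mem σ hσT
      · refine (Formula.realize_equivSentence_symm P _ v).1 ?_
        rw [Equiv.symm_apply_apply]
        refine Formula.realize_iInf.1 hχv ⟨φ, Finset.mem_filter.2 ⟨?_, hφ⟩⟩
        exact Finset.mem_image.2 ⟨_, hσ, Equiv.symm_apply_apply _ _⟩
    exact Theory.Model.isSatisfiable P
  have hMχ : M ⊨ allClosure χ.not :=
    hM.realize_of_mem _ ⟨isPi1Sentence_allClosure hχ.not, models_allClosure hTχ⟩
  exact (realize_allClosure χ.not).1 hMχ id hχM

end Diagram

section Transfer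

open Cardinal

theorem exists_countable_elementarySubstructure [Countable L.Symbols] {M : Type*}
    [L.Structure M] {s : Set M} (hs : s.Countable) :
    ∃ S : L.ElementarySubstructure M, s ⊆ S ∧ Countable S := by
  rcases finite_or_infinite M with hM | hM
  · exact ⟨⊤, Set.subset_univ s, inferInstance⟩
  · obtain ⟨S, hsS, hS⟩ := exists_elementarySubstructure_card_eq L s (ℵ₀ : Cardinal.{0}) le_rfl
      (by simp [hs]) (by rw [lift_aleph0, lift_le_aleph0]; exact mk_le_aleph0)
      (by simp)
    exact ⟨S, hsS, mk_le_aleph0_iff.1 (by simpa using hS.le)⟩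

def PreservedUnderSubstructures (T : L.Theory) : Prop :=
  ∀ (M : Type w) [L.Structure M] [Nonempty M], M ⊨ T →
    ∀ N : L.Substructure M, Nonempty ↥N → ↥N ⊨ T

variable [Countable L.Symbols] {T : L.Theory}

theorem PreservedUnderSubstructures.models_of_embedding
    (hT : PreservedUnderSubstructures.{u, v, w} T) {M N : Type*} [L.Structure M] [L.Structure N]
    [Nonempty M] [Countable M] [N ⊨ T] (g : M ↪[L] N) : M ⊨ T := by
  obtain ⟨S, hgS, _⟩ := exists_countable_elementarySubstructure (L := L) (Set.countable_range g)
  have : Small.{w} S := Countable.toSmall S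
  let Q := Shrink.{w} S
  let e₀ : S ≃ Q := equivShrink S
  let : L.Structure Q := e₀.inducedStructure
  let e : S ≃[L] Q := e₀.inducedStructureEquiv
  have : Nonempty Q := ⟨e ⟨g (Classical.arbitrary M), hgS ⟨_, rfl⟩⟩⟩
  let f : M ↪[L] Q := e.toEmbedding.comp (g.codRestrict S.toSubstructure fun a => hgS ⟨a, rfl⟩)
  have hrange : f.toHom.range ⊨ T := hT Q (StrongHomClass.theory_model e) f.toHom.range
    ⟨⟨_, f.toHom.mem_range_self (Classical.arbitrary M)⟩⟩
  exact StrongHomClass.theory_model f.equivRange.symm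

theorem PreservedUnderSubstructures.models_of_models_pi1Consequences
    (hT : PreservedUnderSubstructures.{u, v, w} T) {M : Type*} [L.Structure M] [Nonempty M]
    [Countable M] (hM : M ⊨ pi1Consequences T) : M ⊨ T := by
  obtain ⟨N⟩ := isSatisfiable_onTheory_union_qfDiagram hM
  let : L.Structure N := (L.lhomWithConstants M).reduct N
  have hN := N.is_model
  rw [Theory.model_union_iff, LHom.onTheory_model] at hN
  have : N ⊨ T := hN.1
  exact hT.models_of_embedding (embeddingOfModelsQFDiagram hN.2)

theorem PreservedUnderSubstructures.pi1Consequences_models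
    (hT : PreservedUnderSubstructures.{u, v, w} T) {σ : L.Sentence} (hσ : T ⊨ᵇ σ) :
    pi1Consequences T ⊨ᵇ σ := by
  refine Theory.models_sentence_iff.2 fun M => ?_
  obtain ⟨S, -, _⟩ := exists_countable_elementarySubstructure (L := L) (M := M) Set.countable_empty
  have : S ⊨ T := hT.models_of_models_pi1Consequences inferInstance
  exact (S.realize_sentence σ).1 (hσ.realize_sentence S)

end Transfer

/-- If `T` is a theory over a finite vocabulary that is
preserved under substructures and `S` is a finite subset of `T`, then there is
a universal (Π⁰₁) sentence `ξ` with `T ⊨ ξ` and `ξ ⊨ S`: a Π⁰₁ interpolant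
between `T` and `S`. -/
theorem exists_pi1_interpolant [Finite L.Symbols] (T : L.Theory)
    (hT : ∀ (M : Type w) [L.Structure M] [Nonempty M], M ⊨ T →
        ∀ N : L.Substructure M, Nonempty ↥N → ↥N ⊨ T)
    (S : Finset L.Sentence) (hS : ↑S ⊆ T) :
    ∃ ξ : L.Sentence, IsPi1Sentence ξ ∧
      (∀ (M : Type w) [L.Structure M] [Nonempty M], M ⊨ T → M ⊨ ξ) ∧
      (∀ (M : Type w) [L.Structure M] [Nonempty M], M ⊨ ξ → ∀ σ ∈ S, M ⊨ σ) := by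
  have hTS : T ⊨ᵇ Formula.iInf fun σ : S => σ.1 :=
    Theory.models_sentence_iff.2 fun M =>
      Formula.realize_iInf.2 fun σ => Theory.realize_sentence_of_mem T (hS σ.2)
  obtain ⟨F, hFT, hFS⟩ :=
    Theory.models_iff_finset_models.1 (PreservedUnderSubstructures.pi1Consequences_models hT hTS)
  obtain ⟨ξ, hξ, hξF⟩ := exists_isPi1Sentence_realize_iff_forall_mem F fun σ hσ => (hFT hσ).1
  refine ⟨ξ, hξ, fun M _ _ hM => (hξF M).2 fun σ hσ => (hFT hσ).2.realize_sentence M, ?_⟩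
  intro M _ _ hMξ σ hσ
  have : M ⊨ (F : L.Theory) := (Theory.model_iff _).2 ((hξF M).1 hMξ)
  exact Formula.realize_iInf.1 (hFS.realize_sentence M) ⟨σ, hσ⟩

end LTGen
end

section
/- Let τ be a finite vocabulary and N, P τ-structures. Then N and P are elementarily equivalent if and only if there exist a τ-structure R that is an elementary extension of P and an elementary embedding of N into R. -/
/-!
Preservation theorems generalizing the Łoś–Tarski theorem
(Sankaran, Adsul, Chakraborty).

Conventions: a vocabulary is a `FirstOrder.Language`; following classical
model theory, all structures (and all substructures considered) are nonempty.
-/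

namespace LTGen

open FirstOrder FirstOrder.Language

universe u v w

variable {L : FirstOrder.Language.{u, v}}

/-- Witness: `R` (with structure `iR`) admits elementary embeddings of both
`P` and `N`; i.e. `R` is (up to isomorphism) an elementary extension of `P`
containing an elementary copy of `N`. -/
def ElemEquivWitness (N P : Type w) [L.Structure N] [L.Structure P]
    (R : Type (max u v w)) (iR : L.Structure R) : Prop :=
  letI := iR
  Nonempty (P ↪ₑ[L] R) ∧ Nonempty (N ↪ₑ[L] R)

/-! By compactness it suffices to satisfy finitely many sentences of the elementary diagrams of
`P` and of `N`, over disjoint sets of new constants. Finitely many sentences of the diagram of `N`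
amount to one formula `φ(n̄)` true in `N`; then `∃ x̄, φ(x̄)` holds in `N`, hence in `P`, and `P`
interprets the constants `n̄` by witnesses. A model of both diagrams receives elementary embeddings
of `P` and of `N`. -/

section Amalgamation

universe w₁ w₂

theorem _root_.FirstOrder.Language.ElementarilyEquivalent.exists_expansion_models_of_subset_elementaryDiagram
    {N P : Type*} [L.Structure N] [L.Structure P] [Nonempty P] (h : N ≅[L] P)
    (S : Finset L[[N]].Sentence) (hS : ↑S ⊆ L.elementaryDiagram N) :
    ∃ v : N → P, letI := constantsOn.structure v; ∀ τ ∈ S, P ⊨ τ := by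
  classical
  let ψ : L.Formula N :=
    Formula.equivSentence.symm (Formula.iInf fun τ : S => (τ : L[[N]].Sentence))
  have hN : N ⊨ Formula.equivSentence ψ := by
    simpa [ψ, Sentence.Realize, Formula.realize_iInf] using fun τ hτ => hS hτ
  obtain ⟨v, hv⟩ := Formula.exists_realize_equivSentence_iff_realize_exClosure.2
    ((h.realize_sentence _).1 (Formula.realize_exClosure_of_realize_equivSentence hN))
  refine ⟨v, fun τ hτ => ?_⟩
  simp only [ψ, Equiv.apply_symm_apply, Sentence.Realize, Formula.realize_iInf] at hv
  exact hv ⟨τ, hτ⟩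

theorem _root_.FirstOrder.Language.ElementaryEmbedding.nonempty_of_models_onTheory_elementaryDiagram
    {M R : Type*} {L' : Language} [L.Structure M] [L'.Structure R] [L.Structure R]
    (φ : L[[M]] →ᴸ L') [(φ.comp (L.lhomWithConstants M)).IsExpansionOn R]
    [R ⊨ φ.onTheory (L.elementaryDiagram M)] : Nonempty (M ↪ₑ[L] R) := by
  let := φ.reduct R
  have : (L.lhomWithConstants M).IsExpansionOn R :=
    ⟨fun f x => (φ.comp (L.lhomWithConstants M)).map_onFunction f x,
      fun r x => (φ.comp (L.lhomWithConstants M)).map_onRelation r x⟩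
  have : R ⊨ L.elementaryDiagram M := (φ.onTheory_model _).1 inferInstance
  exact ⟨ElementaryEmbedding.ofModelsElementaryDiagram L M R⟩

variable (L) (N P : Type*) [L.Structure N] [L.Structure P]

def jointElementaryDiagram : L[[P]][[N]].Theory :=
  (L[[P]].lhomWithConstants N).onTheory (L.elementaryDiagram P) ∪
    ((L.lhomWithConstants P).addConstants N).onTheory (L.elementaryDiagram N)

variable {L N P}

theorem _root_.FirstOrder.Language.ElementarilyEquivalent.isSatisfiable_jointElementaryDiagram
    [Nonempty P] (h : N ≅[L] P) : (jointElementaryDiagram L N P).IsSatisfiable := by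
  classical
  refine Theory.isSatisfiable_iff_isFinitelySatisfiable.2 fun T0 hT0 => ?_
  obtain ⟨T1, T2, rfl, hT1, hT2⟩ := Finset.subset_union_elim hT0
  obtain ⟨S, hS, rfl⟩ := Finset.subset_set_image_iff.1 (hT2.trans Set.sdiff_subset)
  obtain ⟨v, hv⟩ := h.exists_expansion_models_of_subset_elementaryDiagram S hS
  let := constantsOn.structure v
  refine @Theory.Model.isSatisfiable _ _ P _ _ ?_
  rw [Finset.coe_union, Finset.coe_image]
  exact (((LHom.onTheory_model _ _).2 inferInstance).mono hT1).union
    ((LHom.onTheory_model _ _).2 ((Theory.model_iff _).2 hv))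

theorem _root_.FirstOrder.Language.ElementarilyEquivalent.exists_common_elementaryExtension
    {N : Type w₁} {P : Type w₂} [L.Structure N] [L.Structure P] [Nonempty P] (h : N ≅[L] P) :
    ∃ (R : Type (max u v w₁ w₂)) (_ : L.Structure R),
      Nonempty (P ↪ₑ[L] R) ∧ Nonempty (N ↪ₑ[L] R) := by
  obtain ⟨R⟩ := h.isSatisfiable_jointElementaryDiagram
  let : L.Structure R := ((L[[P]].lhomWithConstants N).comp (L.lhomWithConstants P)).reduct R
  obtain ⟨hP, hN⟩ := Theory.model_union_iff.1 R.is_model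
  have : (((L.lhomWithConstants P).addConstants N).comp (L.lhomWithConstants N)).IsExpansionOn R :=
    ⟨fun _ _ => rfl, fun _ _ => rfl⟩
  exact ⟨R, inferInstance,
    ElementaryEmbedding.nonempty_of_models_onTheory_elementaryDiagram (L[[P]].lhomWithConstants N),
    ElementaryEmbedding.nonempty_of_models_onTheory_elementaryDiagram
      ((L.lhomWithConstants P).addConstants N)⟩

end Amalgamation

theorem elementarilyEquivalent_iff_common_elemExt_general
    (N P : Type w) [L.Structure N] [L.Structure P] [Nonempty P] :
    N ≅[L] P ↔
      ∃ (R : Type (max u v w)) (iR : L.Structure R), ElemEquivWitness N P R iR := by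
  refine ⟨fun h => h.exists_common_elementaryExtension, ?_⟩
  rintro ⟨R, iR, ⟨fP⟩, ⟨fN⟩⟩
  exact fN.elementarilyEquivalent.trans fP.elementarilyEquivalent.symm

/-- Over a finite vocabulary, two structures `N` and `P` are
elementarily equivalent iff there exist an elementary extension `R` of `P`
and an elementary embedding of `N` into `R`. -/
theorem elementarilyEquivalent_iff_common_elemExt [Finite L.Symbols]
    (N P : Type w) [L.Structure N] [L.Structure P] [Nonempty N] [Nonempty P] :
    N ≅[L] P ↔
      ∃ (R : Type (max u v w)) (iR : L.Structure R), ElemEquivWitness N P R iR :=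
  elementarilyEquivalent_iff_common_elemExt_general N P

end LTGen
end
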